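/- Let F be a field of characteristic p > 2, let α be a partition of n and β a one-box-shift of α with β_a = α_a − 1 and β_b = α_b + 1 for a < b, and let T be a semistandard α-tableau of type β. If i ≥ 1 and 1 ≤ r ≤ β_{i+1} − 1 are such that the composite θ̂_T ∘ ψ_{i,r} : S^α → M^ν is non-zero, then a ≤ i < b and r = β_{i+1} − 1. -/

import Mathlib

/-!
The composite `ψ_{i,r} ∘ θ_T` commutes with the action of `Σ_n`, so its value on a
polytabloid `e_t` is the signed sum, over the column stabilizer of `t`, of the translates of
its value on `{t}`. Every `ν`-tabloid `h` occurring in that value puts more than `α_i` of the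
symbols of rows `i` and `i + 1` of `t` into row `i`, unless `a ≤ i < b` and `r = β_{i+1} - 1`:
since `T` is semistandard, at least `α_i + β_{i+1} - [a ≤ i < b]` symbols lie in rows
`i, i + 1` both of `t` and of the `β`-tabloid, and `ψ_{i,r}` leaves only `r` of them in row
`i + 1`. Two of the symbols put into row `i` then share a column of `t`, and their
transposition fixes `h` and reverses signs, so the contributions of `h` cancel.
-/

namespace CarterPayne

open Finset

/-- A partition of `n`, presented by its parts function; rows are indexed from `1`. -/
structure Partition (n : ℕ) where
  parts : ℕ → ℕ
  parts_zero : parts 0 = 0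
  antitone : ∀ ⦃i j : ℕ⦄, 0 < i → i ≤ j → parts j ≤ parts i
  finite_support : (Function.support parts).Finite
  sum_parts : ∑ᶠ i, parts i = n

variable {n : ℕ}

/-- The set of cells `(row, column)` (both 1-indexed) of the Young diagram of `μ`. -/
def Partition.cells (μ : Partition n) : Set (ℕ × ℕ) :=
  {c | 0 < c.1 ∧ 0 < c.2 ∧ c.2 ≤ μ.parts c.1}

/-- A tabloid for the composition `c` of `n`: an assignment of the `n` symbols to rows
(rows indexed from 1), row `i` receiving exactly `c i` symbols. -/
def Tabloid (n : ℕ) (c : ℕ → ℕ) : Type :=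
  {g : Fin n → ℕ // ∀ i, (Finset.univ.filter fun k => g k = i).card = c i}

/-- The permutation module `M^c` over `R`: the free `R`-module on the set of tabloids. -/
abbrev PermMod (R : Type*) [CommRing R] (n : ℕ) (c : ℕ → ℕ) := Tabloid n c →₀ R

/-- The action of a permutation of the symbols on tabloids. -/
def permTabloid (c : ℕ → ℕ) (π : Equiv.Perm (Fin n)) (f : Tabloid n c) : Tabloid n c :=
  ⟨fun k => f.1 (π.symm k), fun i => by
    rw [← f.2 i]
    exact Finset.card_equiv π.symm fun a => by simp⟩

/-- The `R`-linear action of a permutation of the symbols on `M^c`. -/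
noncomputable def permM (R : Type*) [CommRing R] (c : ℕ → ℕ) (π : Equiv.Perm (Fin n)) :
    PermMod R n c →ₗ[R] PermMod R n c :=
  Finsupp.lmapDomain R R (permTabloid c π)

/-- A bijective `μ`-tableau, presented by the placement map which sends each of the
`n` symbols to the cell of the Young diagram containing it. -/
structure Placement (μ : Partition n) where
  pos : Fin n → ℕ × ℕ
  mem : ∀ k, pos k ∈ μ.cells
  inj : Function.Injective pos
  surj : ∀ c ∈ μ.cells, ∃ k, pos k = c

/-- The column stabilizer of a bijective tableau, as a set of permutations of the symbols. -/
def colStab {μ : Partition n} (T : Placement μ) : Finset (Equiv.Perm (Fin n)) :=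
  Finset.univ.filter fun π => ∀ k, (T.pos (π k)).2 = (T.pos k).2

lemma rowFiber_card {μ : Partition n} (T : Placement μ) (i : ℕ) :
    (Finset.univ.filter fun k => (T.pos k).1 = i).card = μ.parts i := by
  classical
  have h : (Finset.univ.filter fun k => (T.pos k).1 = i).card
      = (Finset.Icc 1 (μ.parts i)).card := by
    apply Finset.card_bij (fun k _ => (T.pos k).2)
    · intro a ha
      simp only [Finset.mem_filter, Finset.mem_univ, true_and] at ha
      obtain ⟨h1, h2, h3⟩ := T.mem a
      exact Finset.mem_Icc.mpr ⟨h2, ha ▸ h3⟩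
    · intro a ha b hb hab
      simp only [Finset.mem_filter, Finset.mem_univ, true_and] at ha hb
      exact T.inj (Prod.ext (ha.trans hb.symm) hab)
    · intro j hj
      rw [Finset.mem_Icc] at hj
      have hi0 : 0 < i := by
        rcases Nat.eq_zero_or_pos i with h0 | h0
        · exfalso; rw [h0, μ.parts_zero] at hj; omega
        · exact h0
      obtain ⟨k, hk⟩ := T.surj (i, j) ⟨hi0, hj.1, hj.2⟩
      exact ⟨k, by simp [hk], by simp [hk]⟩
  rw [h, Nat.card_Icc]
  omega

/-- The row tabloid `{tπ}` associated to the bijective tableau `tπ`. -/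
def rowTabloid {μ : Partition n} (T : Placement μ) (π : Equiv.Perm (Fin n)) :
    Tabloid n μ.parts :=
  ⟨fun k => (T.pos (π k)).1, fun i => by
    rw [← rowFiber_card T i]
    exact Finset.card_equiv π fun a => by simp⟩

/-- The polytabloid `e_t` attached to a bijective tableau `t`. -/
noncomputable def polytabloid (R : Type*) [CommRing R] {μ : Partition n} (T : Placement μ) :
    PermMod R n μ.parts :=
  ∑ π ∈ colStab T, ((Equiv.Perm.sign π : ℤ) : R) • Finsupp.single (rowTabloid T π) (1 : R)

/-- The Specht module `S^μ`, the span in `M^μ` of all polytabloids. -/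
noncomputable def Specht (R : Type*) [CommRing R] (μ : Partition n) :
    Submodule R (PermMod R n μ.parts) :=
  Submodule.span R (Set.range fun T : Placement μ => polytabloid R T)

/-- `β` is obtained from the partition `α` of `n` by moving one box from
(the end of) row `a` to (the end of) row `b`; i.e. `β` is a one-box-shift of `α`. -/
structure OneBoxShift {n : ℕ} (α β : Partition n) (a b : ℕ) : Prop where
  a_pos : 0 < a
  a_lt_b : a < b
  rem : α.parts (a + 1) < α.parts a
  add : α.parts b < α.parts (b - 1)
  at_a : β.parts a = α.parts a - 1
  at_b : β.parts b = α.parts b + 1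
  elsewhere : ∀ i, i ≠ a → i ≠ b → β.parts i = α.parts i

-- finiteness of the set of tabloids
lemma tabloid_finite (n : ℕ) (c : ℕ → ℕ) :
    {g : Fin n → ℕ | ∀ i, (Finset.univ.filter fun k => g k = i).card = c i}.Finite := by
  classical
  rcases Set.eq_empty_or_nonempty
      {g : Fin n → ℕ | ∀ i, (Finset.univ.filter fun k => g k = i).card = c i} with h | ⟨g₀, hg₀⟩
  · rw [h]; exact Set.finite_empty
  · apply Set.Finite.subset (Set.Finite.pi fun _ : Fin n => Set.finite_range g₀)
    intro g hg
    simp only [Set.mem_pi, Set.mem_univ, forall_true_left]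
    intro k
    have h1 : (Finset.univ.filter fun k' => g k' = g k).card = c (g k) := hg (g k)
    have h2 : (Finset.univ.filter fun k' => g₀ k' = g k).card = c (g k) := hg₀ (g k)
    have hp : 0 < c (g k) := by
      rw [← h1]
      exact Finset.card_pos.mpr ⟨k, by simp⟩
    rw [← h2] at hp
    obtain ⟨k', hk'⟩ := Finset.card_pos.mp hp
    simp only [Finset.mem_filter] at hk'
    exact ⟨k', hk'.2⟩

noncomputable instance (c : ℕ → ℕ) : Fintype (Tabloid n c) :=
  (tabloid_finite n c).fintype

lemma cells_finite (μ : Partition n) : μ.cells.Finite := by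
  apply Set.Finite.subset (μ.finite_support.prod (Set.finite_Icc 1 (μ.parts 1)))
  rintro ⟨i, j⟩ ⟨h1, h2, h3⟩
  refine Set.mem_prod.mpr ⟨?_, ?_⟩
  · simp only [Function.mem_support]
    intro h0
    rw [h0] at h3; omega
  · exact ⟨h2, le_trans h3 (μ.antitone Nat.one_pos h1)⟩

/-- The finset of cells of the Young diagram of `μ`. -/
noncomputable def cellFinset (μ : Partition n) : Finset (ℕ × ℕ) := (cells_finite μ).toFinset

/-- An `α`-tableau (a filling of the diagram of `α` by natural numbers) has type `c`
if the entry `j` appears exactly `c j` times. -/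
def IsTypeOf (α : Partition n) (c : ℕ → ℕ) (T : ℕ × ℕ → ℕ) : Prop :=
  ∀ j, ((cellFinset α).filter fun cc => T cc = j).card = c j

/-- A filling of the diagram of `α` is semistandard if its entries are nondecreasing
along rows and strictly increasing down columns. -/
def IsSemistandard (α : Partition n) (T : ℕ × ℕ → ℕ) : Prop :=
  (∀ i j j', (i, j) ∈ α.cells → (i, j') ∈ α.cells → j ≤ j' → T (i, j) ≤ T (i, j')) ∧
  (∀ i i' j, (i, j) ∈ α.cells → (i', j) ∈ α.cells → i < i' → T (i, j) < T (i', j))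

/-- Number of entries equal to `j` in row `i` of the `α`-tableau `T`. -/
def rowContent (α : Partition n) (T : ℕ × ℕ → ℕ) (i j : ℕ) : ℕ :=
  ((Finset.Icc 1 (α.parts i)).filter fun col => T (i, col) = j).card

open Classical in
/-- James' homomorphism `θ_T : M^α → M^c` attached to an `α`-tableau `T` of type `c`:
an `α`-tabloid `f` is sent to the sum of all `c`-tabloids `g` such that, for all `i`, `j`,
exactly `rowContent α T i j` symbols lie in row `i` of `f` and row `j` of `g`.  (This is
the sum over the row-equivalence class of `T` of the corresponding tabloids.) -/
noncomputable def theta (R : Type*) [CommRing R] (α : Partition n) (c : ℕ → ℕ)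
    (T : ℕ × ℕ → ℕ) : PermMod R n α.parts →ₗ[R] PermMod R n c :=
  Finsupp.lift (PermMod R n c) R (Tabloid n α.parts) fun f =>
    ∑ g ∈ Finset.univ.filter (fun g : Tabloid n c =>
        ∀ i j, (Finset.univ.filter fun k => f.1 k = i ∧ g.1 k = j).card = rowContent α T i j),
      Finsupp.single g (1 : R)

/-- The restriction `θ̂_T` of `θ_T` to the Specht module `S^α`. -/
noncomputable def thetaHat (R : Type*) [CommRing R] (α : Partition n) (c : ℕ → ℕ)
    (T : ℕ × ℕ → ℕ) : ↥(Specht R α) →ₗ[R] PermMod R n c :=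
  (theta R α c T).comp (Specht R α).subtype

/-- The composition `ν` obtained from `c` by replacing the rows `i`, `i+1` with rows of
sizes `c i + c (i+1) - r` and `r`. -/
def nuComp (c : ℕ → ℕ) (i r : ℕ) : ℕ → ℕ :=
  fun j => if j = i then c i + c (i + 1) - r else if j = i + 1 then r else c j

open Classical in
/-- James' homomorphism `ψ_{i,r} : M^c → M^ν`: a tabloid is sent to the sum of all
tabloids obtained from it by changing all but `r` of the entries in row `i+1` to `i`. -/
noncomputable def psi (R : Type*) [CommRing R] (c : ℕ → ℕ) (i r : ℕ) :
    PermMod R n c →ₗ[R] PermMod R n (nuComp c i r) :=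
  Finsupp.lift (PermMod R n (nuComp c i r)) R (Tabloid n c) fun f =>
    ∑ g ∈ Finset.univ.filter (fun g : Tabloid n (nuComp c i r) =>
        ∀ k, g.1 k = f.1 k ∨ (f.1 k = i + 1 ∧ g.1 k = i)),
      Finsupp.single g (1 : R)

/-- Normalized semistandard `α`-tableaux of type `c` (entries outside the diagram are `0`). -/
def SSTSet (α : Partition n) (c : ℕ → ℕ) : Set (ℕ × ℕ → ℕ) :=
  {T | IsSemistandard α T ∧ IsTypeOf α c T ∧ ∀ cc, cc ∉ α.cells → T cc = 0}

lemma SSTSet_finite (α : Partition n) (c : ℕ → ℕ) (hc : (Function.support c).Finite) :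
    (SSTSet α c).Finite := by
  classical
  have hinj : Set.InjOn (fun T (cc : ↥(cellFinset α)) => T cc.1) (SSTSet α c) := by
    intro T hT S hS h
    funext cc
    by_cases hcc : cc ∈ α.cells
    · have hmem : cc ∈ cellFinset α := (Set.Finite.mem_toFinset _).mpr hcc
      exact congrFun h ⟨cc, hmem⟩
    · rw [hT.2.2 cc hcc, hS.2.2 cc hcc]
  have himage : ((fun T (cc : ↥(cellFinset α)) => T cc.1) '' SSTSet α c) ⊆
      Set.univ.pi (fun _ : ↥(cellFinset α) => insert 0 (Function.support c)) := by
    rintro _ ⟨T, hT, rfl⟩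
    intro cc _
    have h1 := hT.2.1 (T cc.1)
    have h2 : cc.1 ∈ (cellFinset α).filter fun d => T d = T cc.1 :=
      Finset.mem_filter.mpr ⟨cc.2, rfl⟩
    have h3 : 0 < c (T cc.1) := h1 ▸ Finset.card_pos.mpr ⟨cc.1, h2⟩
    exact Set.mem_insert_iff.mpr (Or.inr (by
      simp only [Function.mem_support]
      omega))
  exact Set.Finite.of_finite_image
    (Set.Finite.subset (Set.Finite.pi fun _ => hc.insert 0) himage) hinj

/-- The finset of all (normalized) semistandard `α`-tableaux of type `β`. -/
noncomputable def sstFinset (α β : Partition n) : Finset (ℕ × ℕ → ℕ) :=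
  (SSTSet_finite α β.parts β.finite_support).toFinset

/-- `T̂(u)`, the entry at the end of row `u` of `T`. -/
def hatOf (α : Partition n) (T : ℕ × ℕ → ℕ) (u : ℕ) : ℕ := T (u, α.parts u)

/-- The semistandard `α`-set `{T}` of `T`: those rows `u ∈ {a, …, b-1}` with `T̂(u) ≠ u`. -/
def Tset (α : Partition n) (a b : ℕ) (T : ℕ × ℕ → ℕ) : Finset ℕ :=
  (Finset.Icc a (b - 1)).filter fun u => hatOf α T u ≠ u

/-- The removable set `{R}`: those rows `i ∈ {a, …, b-1}` such that `(i, α_i)` is a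
removable node of `[α]`. -/
def Rset (α : Partition n) (a b : ℕ) : Finset ℕ :=
  (Finset.Icc a (b - 1)).filter fun i => α.parts (i + 1) < α.parts i

/-- The hook lengths `h_i` in the `(α_b + 1)`-th column of `[α]` (with `h_i = 0` for `i ≥ b`):
`h_i = α_i - α_b + b - i - 1`. -/
def hook (α : Partition n) (b i : ℕ) : ℤ :=
  if i < b then (α.parts i : ℤ) - (α.parts b : ℤ) + (b : ℤ) - (i : ℤ) - 1 else 0

/-- `T̂⁻¹(v)`: the row `u ∈ {a, …, b-1}` with `T̂(u) = v`. -/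
noncomputable def invHat (α : Partition n) (a b : ℕ) (T : ℕ × ℕ → ℕ) (v : ℕ) : ℕ :=
  sInf {u | a ≤ u ∧ u ≤ b - 1 ∧ hatOf α T u = v}

/-- The smallest element of `X` greater than `u`, or `b` if there is none. -/
noncomputable def nextIn (X : Finset ℕ) (b u : ℕ) : ℕ := sInf ({v | v ∈ X ∧ u < v} ∪ {b})

/-- The bijection `T̂ : {a,…,b-1} → {a+1,…,b}` determined by a semistandard set `X`:
`T̂` maps each `u ∈ X` to the next element of `X ∪ {b}` above it, and fixes `u ∉ X`. -/
noncomputable def hatOfSet (X : Finset ℕ) (b u : ℕ) : ℕ :=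
  if u ∈ X then nextIn X b u else u

open Classical in
/-- The (normalized) semistandard `α`-tableau of type `β` whose semistandard set is `X`:
every cell of row `i` contains `i`, except that for `a ≤ i ≤ b-1` the last cell of row `i`
contains `T̂(i)` (where `T̂` is the bijection determined by `X`). -/
noncomputable def tableauOfSet (α : Partition n) (a b : ℕ) (X : Finset ℕ) : ℕ × ℕ → ℕ :=
  fun cc =>
    if cc ∈ α.cells then
      (if a ≤ cc.1 ∧ cc.1 ≤ b - 1 ∧ cc.2 = α.parts cc.1 then hatOfSet X b cc.1 else cc.1)
    else 0

/-- `X` is a semistandard `α`-set of type `β` (for the one-box shift from row `a` to row `b`):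
`a ∈ X ⊆ {a, …, b-1}`, and `u ∈ X` together with `α_{u+1} = α_u` forces `u+1 ∈ X`. -/
def IsSSSet (α : Partition n) (a b : ℕ) (X : Finset ℕ) : Prop :=
  a ∈ X ∧ (∀ u ∈ X, a ≤ u ∧ u ≤ b - 1) ∧
    ∀ u ∈ X, α.parts (u + 1) = α.parts u → u + 1 ∈ X

/-- The coefficient `(-1)^{|T|} ∏_{u ∈ {R}\{T}} h_u` of `θ̂_T` in the Carter-Payne
homomorphism. -/
noncomputable def cpCoeff (α : Partition n) (a b : ℕ) (T : ℕ × ℕ → ℕ) : ℤ :=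
  (-1) ^ (Tset α a b T).card * ∏ u ∈ Rset α a b \ Tset α a b T, hook α b u

instance (c : ℕ → ℕ) : MulAction (Equiv.Perm (Fin n)) (Tabloid n c) where
  smul := permTabloid c
  one_smul _ := rfl
  mul_smul _ _ _ := rfl

lemma smul_tabloid_apply {c : ℕ → ℕ} (σ : Equiv.Perm (Fin n)) (f : Tabloid n c) (k : Fin n) :
    (σ • f).1 k = f.1 (σ⁻¹ k) := rfl

lemma rowTabloid_eq_inv_smul {μ : Partition n} (t : Placement μ) (σ : Equiv.Perm (Fin n)) :
    rowTabloid t σ = σ⁻¹ • rowTabloid t 1 := rfl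

section PermMod

variable (R : Type*) [CommRing R] (c : ℕ → ℕ)

lemma permM_single (σ : Equiv.Perm (Fin n)) (f : Tabloid n c) (x : R) :
    permM R c σ (Finsupp.single f x) = Finsupp.single (σ • f) x :=
  Finsupp.mapDomain_single

lemma permM_mul (σ π : Equiv.Perm (Fin n)) (x : PermMod R n c) :
    permM R c (σ * π) x = permM R c σ (permM R c π x) := by
  simp only [permM, Finsupp.lmapDomain_apply, ← Finsupp.mapDomain_comp]
  rfl

lemma permM_swap_single {f : Tabloid n c} {k k' : Fin n} (he : f.1 k = f.1 k') :
    permM R c (Equiv.swap k k') (Finsupp.single f 1) = Finsupp.single f 1 := by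
  rw [permM_single]
  congr 1
  refine Subtype.ext (funext fun m => ?_)
  rw [smul_tabloid_apply, Equiv.swap_inv]
  rcases eq_or_ne m k with rfl | hk
  · rw [Equiv.swap_apply_left, he]
  rcases eq_or_ne m k' with rfl | hk'
  · rw [Equiv.swap_apply_right, he]
  · rw [Equiv.swap_apply_of_ne_of_ne hk hk']

end PermMod

section ColumnAntisymmetry

variable {μ : Partition n}

lemma mul_mem_colStab (t : Placement μ) {σ τ : Equiv.Perm (Fin n)} (hτ : τ ∈ colStab t)
    (hσ : σ ∈ colStab t) : τ * σ ∈ colStab t := by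
  simp only [colStab, mem_filter, mem_univ, true_and] at hτ hσ ⊢
  exact fun k => (hτ (σ k)).trans (hσ k)

lemma swap_mem_colStab (t : Placement μ) {k k' : Fin n} (hcol : (t.pos k).2 = (t.pos k').2) :
    Equiv.swap k k' ∈ colStab t := by
  simp only [colStab, mem_filter, mem_univ, true_and]
  intro m
  rcases eq_or_ne m k with rfl | hk
  · rw [Equiv.swap_apply_left, hcol]
  rcases eq_or_ne m k' with rfl | hk'
  · rw [Equiv.swap_apply_right, hcol]
  · rw [Equiv.swap_apply_of_ne_of_ne hk hk']

lemma sum_colStab_sign_smul_permM_eq_zero (R : Type*) [CommRing R] (c : ℕ → ℕ)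
    (t : Placement μ) {k k' : Fin n} (hne : k ≠ k') (hcol : (t.pos k).2 = (t.pos k').2)
    {x : PermMod R n c} (hx : permM R c (Equiv.swap k k') x = x) :
    ∑ σ ∈ colStab t, ((Equiv.Perm.sign σ : ℤ) : R) • permM R c σ⁻¹ x = 0 := by
  set τ := Equiv.swap k k'
  refine sum_involution (fun σ _ => τ * σ) (fun σ _ => ?_) (fun σ _ _ => ?_)
    (fun σ hσ => mul_mem_colStab t (swap_mem_colStab t hcol) hσ)
    (fun σ _ => by rw [← mul_assoc, Equiv.swap_mul_self, one_mul])
  · have hterm : permM R c (τ * σ)⁻¹ x = permM R c σ⁻¹ x := by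
      rw [mul_inv_rev, Equiv.swap_inv, permM_mul, hx]
    rw [hterm, Equiv.Perm.sign_mul, Equiv.Perm.sign_swap hne, ← add_smul]
    push_cast
    simp
  · rw [Ne, mul_eq_right, Equiv.swap_eq_one_iff]
    exact hne

end ColumnAntisymmetry

section Equivariance

variable (R : Type*) [CommRing R]

lemma card_filter_smul_eq {c d : ℕ → ℕ} (σ : Equiv.Perm (Fin n)) (f : Tabloid n c)
    (g : Tabloid n d) (u v : ℕ) :
    #{k | (σ • f).1 k = u ∧ (σ • g).1 k = v} = #{k | f.1 k = u ∧ g.1 k = v} :=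
  (card_equiv σ fun k => by
    rw [mem_filter, mem_filter, smul_tabloid_apply, smul_tabloid_apply]
    simp only [mem_univ, Equiv.Perm.coe_inv, Equiv.symm_apply_apply]).symm

open Classical in
lemma theta_single (α : Partition n) (c : ℕ → ℕ) (T : ℕ × ℕ → ℕ) (f : Tabloid n α.parts) :
    theta R α c T (Finsupp.single f 1) =
      ∑ g with ∀ u v, #{k | f.1 k = u ∧ g.1 k = v} = rowContent α T u v,
        Finsupp.single g (1 : R) := by
  rw [theta, Finsupp.lift_apply, Finsupp.sum_single_index] <;> simp

open Classical in
lemma psi_single (c : ℕ → ℕ) (i r : ℕ) (g : Tabloid n c) :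
    psi R c i r (Finsupp.single g 1) =
      ∑ h : Tabloid n (nuComp c i r) with ∀ k, h.1 k = g.1 k ∨ (g.1 k = i + 1 ∧ h.1 k = i),
        Finsupp.single h (1 : R) := by
  rw [psi, Finsupp.lift_apply, Finsupp.sum_single_index] <;> simp

lemma theta_comp_permM (α : Partition n) (c : ℕ → ℕ) (T : ℕ × ℕ → ℕ)
    (σ : Equiv.Perm (Fin n)) :
    (theta R α c T).comp (permM R α.parts σ) = (permM R c σ).comp (theta R α c T) := by
  classical
  refine Finsupp.lhom_ext' fun f => LinearMap.ext_ring ?_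
  simp only [LinearMap.comp_apply, Finsupp.lsingle_apply, permM_single, theta_single, map_sum]
  refine (sum_equiv (MulAction.toPerm σ) (fun g => ?_) (fun g _ => rfl)).symm
  simp only [mem_filter, mem_univ, true_and, MulAction.toPerm_apply, card_filter_smul_eq]

lemma psi_comp_permM (c : ℕ → ℕ) (i r : ℕ) (σ : Equiv.Perm (Fin n)) :
    (psi R c i r).comp (permM R c σ) = (permM R (nuComp c i r) σ).comp (psi R c i r) := by
  classical
  refine Finsupp.lhom_ext' fun g => LinearMap.ext_ring ?_
  simp only [LinearMap.comp_apply, Finsupp.lsingle_apply, permM_single, psi_single, map_sum]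
  refine (sum_equiv (MulAction.toPerm σ) (fun h => ?_) (fun h _ => rfl)).symm
  simp only [mem_filter, mem_univ, true_and, MulAction.toPerm_apply]
  exact ⟨fun H k => H (σ⁻¹ k), fun H k => by simpa [smul_tabloid_apply] using H (σ k)⟩

end Equivariance

section Counting

variable {α β : Partition n} {T : ℕ × ℕ → ℕ}

lemma one_le_of_isTypeOf (htype : IsTypeOf α β.parts T) {x : ℕ × ℕ} (hx : x ∈ α.cells) :
    1 ≤ T x := by
  by_contra! h0
  have hx0 : x ∈ (cellFinset α).filter fun y => T y = 0 :=
    mem_filter.mpr ⟨(cells_finite α).mem_toFinset.mpr hx, by omega⟩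
  have h := htype 0
  rw [β.parts_zero] at h
  exact (card_pos.mpr ⟨x, hx0⟩).ne' h

lemma row_le_of_isSemistandard (hss : IsSemistandard α T) (htype : IsTypeOf α β.parts T) :
    ∀ {u c : ℕ}, (u, c) ∈ α.cells → u ≤ T (u, c) := by
  intro u
  induction u with
  | zero => intros; exact Nat.zero_le _
  | succ u ih =>
    intro c hc
    rcases Nat.eq_zero_or_pos u with rfl | hu
    · exact one_le_of_isTypeOf htype hc
    · have hc' : (u, c) ∈ α.cells := ⟨hu, hc.2.1, hc.2.2.trans (α.antitone hu u.le_succ)⟩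
      have := hss.2 u (u + 1) c hc' hc u.lt_succ_self
      have := ih hc'
      omega

lemma rowContent_eq_zero_of_lt (hss : IsSemistandard α T) (htype : IsTypeOf α β.parts T)
    {u v : ℕ} (hvu : v < u) : rowContent α T u v = 0 := by
  rw [rowContent, card_eq_zero, filter_eq_empty_iff]
  intro col hcol hT
  rw [mem_Icc] at hcol
  have := row_le_of_isSemistandard hss htype ⟨by omega, hcol.1, hcol.2⟩
  omega

lemma row_le_of_compatible (hss : IsSemistandard α T) (htype : IsTypeOf α β.parts T)
    (t : Placement α) {c : ℕ → ℕ} {g : Tabloid n c}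
    (hg : ∀ u v, #{k | (t.pos k).1 = u ∧ g.1 k = v} = rowContent α T u v) (k : Fin n) :
    (t.pos k).1 ≤ g.1 k := by
  by_contra! hlt
  have h := hg (t.pos k).1 (g.1 k)
  rw [rowContent_eq_zero_of_lt hss htype hlt, card_eq_zero, filter_eq_empty_iff] at h
  exact h (mem_univ k) ⟨rfl, rfl⟩

lemma card_filter_le_eq_sum_range {f : Fin n → ℕ} {c : ℕ → ℕ}
    (hf : ∀ u, #{k | f k = u} = c u) (i : ℕ) :
    #{k | f k ≤ i} = ∑ u ∈ range (i + 1), c u := by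
  classical
  rw [card_eq_sum_card_fiberwise (f := f) (t := range (i + 1))
    (fun k hk => by simpa [Nat.lt_succ_iff] using hk)]
  refine sum_congr rfl fun u hu => ?_
  rw [← hf u, filter_filter]
  congr 1
  refine filter_congr fun k _ => ?_
  rw [mem_range] at hu
  omega

lemma sum_range_parts_eq {a b : ℕ} (hshift : OneBoxShift α β a b) (i : ℕ) :
    ∑ u ∈ range (i + 1), α.parts u
      = ∑ u ∈ range (i + 1), β.parts u + if a ≤ i ∧ i < b then 1 else 0 := by
  have := hshift.a_pos
  have := hshift.a_lt_b
  induction i with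
  | zero => simp [α.parts_zero, β.parts_zero]; omega
  | succ i ih =>
    have hrow : α.parts (i + 1) + (if i + 1 = b then 1 else 0)
        = β.parts (i + 1) + (if i + 1 = a then 1 else 0) := by
      by_cases ha : i + 1 = a
      · have := hshift.rem
        rw [ha, hshift.at_a, if_neg (by omega), if_pos rfl]
        omega
      by_cases hb : i + 1 = b
      · rw [hb, hshift.at_b, if_pos rfl, if_neg (by omega)]
      · rw [hshift.elsewhere _ ha hb, if_neg hb, if_neg ha]
    rw [sum_range_succ _ (i + 1), sum_range_succ _ (i + 1), ih]
    split_ifs at hrow ⊢ <;> omega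

lemma card_filter_row_le_lt {a b : ℕ} (hshift : OneBoxShift α β a b)
    (hss : IsSemistandard α T) (htype : IsTypeOf α β.parts T) (t : Placement α)
    {g : Tabloid n β.parts}
    (hg : ∀ u v, #{k | (t.pos k).1 = u ∧ g.1 k = v} = rowContent α T u v) (i : ℕ) :
    #{k | (t.pos k).1 ≤ i ∧ i < g.1 k} = if a ≤ i ∧ i < b then 1 else 0 := by
  have hle := row_le_of_compatible hss htype t hg
  have hsub : univ.filter (fun k => g.1 k ≤ i) ⊆ univ.filter fun k => (t.pos k).1 ≤ i := by
    intro k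
    simp only [mem_filter, mem_univ, true_and]
    have := hle k
    omega
  have hdiff : univ.filter (fun k => (t.pos k).1 ≤ i ∧ i < g.1 k)
      = (univ.filter fun k => (t.pos k).1 ≤ i) \ univ.filter fun k => g.1 k ≤ i := by
    ext k
    simp only [mem_filter, mem_sdiff, mem_univ, true_and]
    omega
  rw [hdiff, card_sdiff_of_subset hsub, card_filter_le_eq_sum_range (rowFiber_card t),
    card_filter_le_eq_sum_range g.2, sum_range_parts_eq hshift]
  omega

lemma le_card_two_rows_add_card_row_le_lt (hss : IsSemistandard α T)
    (htype : IsTypeOf α β.parts T) (t : Placement α) {g : Tabloid n β.parts}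
    (hg : ∀ u v, #{k | (t.pos k).1 = u ∧ g.1 k = v} = rowContent α T u v) (i : ℕ) :
    α.parts i + β.parts (i + 1) ≤
      #{k | ((t.pos k).1 = i ∨ (t.pos k).1 = i + 1) ∧ (g.1 k = i ∨ g.1 k = i + 1)}
        + #{k | (t.pos k).1 ≤ i ∧ i < g.1 k} := by
  have hle := row_le_of_compatible hss htype t hg
  set A := univ.filter fun k => (t.pos k).1 = i
  set B := univ.filter fun k => g.1 k = i + 1
  set S := univ.filter fun k =>
    ((t.pos k).1 = i ∨ (t.pos k).1 = i + 1) ∧ (g.1 k = i ∨ g.1 k = i + 1)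
  set E := univ.filter fun k => (t.pos k).1 ≤ i ∧ i < g.1 k
  have hunion : A ∪ B ⊆ S ∪ E := by
    intro k
    simp only [A, B, S, E, mem_union, mem_filter, mem_univ, true_and]
    have := hle k
    omega
  have hinter : A ∩ B ⊆ S ∩ E := by
    intro k
    simp only [A, B, S, E, mem_inter, mem_filter, mem_univ, true_and]
    omega
  calc α.parts i + β.parts (i + 1) = #A + #B := by rw [rowFiber_card, g.2]
    _ = #(A ∪ B) + #(A ∩ B) := (card_union_add_card_inter A B).symm
    _ ≤ #(S ∪ E) + #(S ∩ E) := add_le_add (card_le_card hunion) (card_le_card hinter)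
    _ = #S + #E := card_union_add_card_inter S E

end Counting

lemma exists_column_pair_of_compatible {α β : Partition n} {a b : ℕ}
    (hshift : OneBoxShift α β a b) {T : ℕ × ℕ → ℕ} (hss : IsSemistandard α T)
    (htype : IsTypeOf α β.parts T) {i r : ℕ} (hi : 1 ≤ i) (hr2 : r + 1 ≤ β.parts (i + 1))
    (hbad : ¬(a ≤ i ∧ i < b ∧ r + 1 = β.parts (i + 1))) (t : Placement α)
    {g : Tabloid n β.parts}
    (hg : ∀ u v, #{k | (t.pos k).1 = u ∧ g.1 k = v} = rowContent α T u v)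
    {h : Tabloid n (nuComp β.parts i r)} (hh : ∀ k, h.1 k = g.1 k ∨ (g.1 k = i + 1 ∧ h.1 k = i)) :
    ∃ k k', k ≠ k' ∧ (t.pos k).2 = (t.pos k').2 ∧ h.1 k = h.1 k' := by
  set S := univ.filter fun k =>
    ((t.pos k).1 = i ∨ (t.pos k).1 = i + 1) ∧ (g.1 k = i ∨ g.1 k = i + 1)
  set A := univ.filter fun k => ((t.pos k).1 = i ∨ (t.pos k).1 = i + 1) ∧ h.1 k = i
  set D := univ.filter fun k => h.1 k = i + 1
  set E := univ.filter fun k => (t.pos k).1 ≤ i ∧ i < g.1 k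
  have hD : #D = r := by simp [D, h.2, nuComp]
  have hS : α.parts i + r + 1 ≤ #S := by
    have h1 : α.parts i + β.parts (i + 1) ≤ #S + #E :=
      le_card_two_rows_add_card_row_le_lt hss htype t hg i
    have h2 : #E = if a ≤ i ∧ i < b then 1 else 0 := card_filter_row_le_lt hshift hss htype t hg i
    split_ifs at h2 <;> omega
  have hSAD : S ⊆ A ∪ D := by
    intro k
    simp only [S, A, D, mem_union, mem_filter, mem_univ, true_and]
    have := hh k
    omega
  have hA : #(Icc 1 (α.parts i)) < #A := by
    have := (card_le_card hSAD).trans (card_union_le A D)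
    rw [Nat.card_Icc]
    omega
  have hcol : Set.MapsTo (fun k => (t.pos k).2) A (Icc 1 (α.parts i)) := by
    intro k hk
    obtain ⟨-, h2, h3⟩ := t.mem k
    have := α.antitone hi (Nat.le_add_right i 1)
    simp only [A, mem_coe, mem_filter, mem_univ, true_and] at hk
    rw [mem_coe, mem_Icc]
    dsimp only
    rcases hk.1 with e | e <;> rw [e] at h3 <;> omega
  obtain ⟨k, hk, k', hk', hne, heq⟩ := exists_ne_map_eq_of_card_lt_of_maps_to hA hcol
  simp only [A, mem_filter] at hk hk'
  exact ⟨k, k', hne, heq, hk.2.2.trans hk'.2.2.symm⟩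

lemma map_polytabloid (R : Type*) [CommRing R] {μ : Partition n} {d : ℕ → ℕ}
    (φ : PermMod R n μ.parts →ₗ[R] PermMod R n d)
    (hφ : ∀ σ, φ.comp (permM R μ.parts σ) = (permM R d σ).comp φ) (t : Placement μ) :
    φ (polytabloid R t) = ∑ σ ∈ colStab t,
      ((Equiv.Perm.sign σ : ℤ) : R) • permM R d σ⁻¹ (φ (Finsupp.single (rowTabloid t 1) 1)) := by
  rw [polytabloid, map_sum]
  refine sum_congr rfl fun σ _ => ?_
  rw [map_smul, rowTabloid_eq_inv_smul, ← permM_single, ← LinearMap.comp_apply, hφ,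
    LinearMap.comp_apply]

lemma psi_theta_polytabloid_eq_zero (R : Type*) [CommRing R] {α β : Partition n} {a b : ℕ}
    (hshift : OneBoxShift α β a b) {T : ℕ × ℕ → ℕ} (hss : IsSemistandard α T)
    (htype : IsTypeOf α β.parts T) {i r : ℕ} (hi : 1 ≤ i) (hr2 : r + 1 ≤ β.parts (i + 1))
    (hbad : ¬(a ≤ i ∧ i < b ∧ r + 1 = β.parts (i + 1))) (t : Placement α) :
    psi R β.parts i r (theta R α β.parts T (polytabloid R t)) = 0 := by
  classical
  have hequiv : ∀ σ, ((psi R β.parts i r).comp (theta R α β.parts T)).comp (permM R α.parts σ)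
      = (permM R _ σ).comp ((psi R β.parts i r).comp (theta R α β.parts T)) := fun σ => by
    rw [LinearMap.comp_assoc, theta_comp_permM, ← LinearMap.comp_assoc, psi_comp_permM,
      LinearMap.comp_assoc]
  rw [← LinearMap.comp_apply, map_polytabloid R _ hequiv, LinearMap.comp_apply, theta_single]
  simp only [map_sum, psi_single, smul_sum]
  rw [sum_comm]
  refine sum_eq_zero fun g hg => ?_
  rw [sum_comm]
  refine sum_eq_zero fun h hh => ?_
  obtain ⟨k, k', hne, hcol, heq⟩ := exists_column_pair_of_compatible hshift hss htype hi hr2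
    hbad t (mem_filter.mp hg).2 (mem_filter.mp hh).2
  exact sum_colStab_sign_smul_permM_eq_zero R _ t hne hcol (permM_swap_single R _ heq)

theorem stmt9_general (F : Type*) [Field F]
    {n : ℕ} (α β : Partition n) (a b : ℕ) (hshift : OneBoxShift α β a b)
    (T : ℕ × ℕ → ℕ) (hss : IsSemistandard α T) (htype : IsTypeOf α β.parts T)
    (i r : ℕ) (hi : 1 ≤ i) (hr2 : r + 1 ≤ β.parts (i + 1))
    (hne : (psi F β.parts i r).comp (thetaHat F α β.parts T) ≠ 0) :
    a ≤ i ∧ i < b ∧ r + 1 = β.parts (i + 1) := by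
  by_contra hbad
  have hSpecht : Specht F α ≤ LinearMap.ker ((psi F β.parts i r).comp (theta F α β.parts T)) :=
    Submodule.span_le.mpr <| Set.range_subset_iff.mpr fun t =>
      psi_theta_polytabloid_eq_zero F hshift hss htype hi hr2 hbad t
  exact hne (LinearMap.ext fun x => hSpecht x.2)

/-- Let `F` be a field of characteristic `p > 2`, `β` a one-box-shift of
`α` with `β_a = α_a - 1`, `β_b = α_b + 1`, `a < b`, and `T` a semistandard `α`-tableau of
type `β`.  If `i ≥ 1` and `1 ≤ r ≤ β_{i+1} - 1` are such that the composite
`θ̂_T ∘ ψ_{i,r} : S^α → M^ν` is non-zero, then `a ≤ i < b` and `r = β_{i+1} - 1`. -/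
theorem stmt9 (F : Type*) [Field F] (p : ℕ) [CharP F p] (hp : 2 < p)
    {n : ℕ} (α β : Partition n) (a b : ℕ) (hshift : OneBoxShift α β a b)
    (T : ℕ × ℕ → ℕ) (hss : IsSemistandard α T) (htype : IsTypeOf α β.parts T)
    (i r : ℕ) (hi : 1 ≤ i) (hr1 : 1 ≤ r) (hr2 : r + 1 ≤ β.parts (i + 1))
    (hne : (psi F β.parts i r).comp (thetaHat F α β.parts T) ≠ 0) :
    a ≤ i ∧ i < b ∧ r + 1 = β.parts (i + 1) :=
  stmt9_general F α β a b hshift T hss htype i r hi hr2 hne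

end CarterPayne
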